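/- arXiv:math/0510491 — 2 statements merged into one kernel-verified Lean document; each statement's English description precedes it below -/
import Mathlib

section
/- Let H = F_2^n and X, Y, D ⊆ H with densities δ_X, δ_Y, δ_D, and suppose ‖X‖_Uni, ‖Y‖_Uni, ‖D‖_Uni ≤ υ. Then | E_{x,x',d,d'∈H} X(x) X(x') D(d) D(d') Y(x+d) Y(x'+d) Y(x+d') Y(x'+d') − δ_X² δ_D² δ_Y⁴ | ≤ C υ for an absolute constant C. -/
open Finset

noncomputable section

/-- The group `F_2^n`. -/
abbrev H (n : ℕ) : Type := Fin n → ZMod 2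

/-- The character `x ↦ (-1)^{x·ξ}`. -/
def chr {n : ℕ} (x ξ : H n) : ℝ := (-1 : ℝ) ^ ((∑ i, x i * ξ i).val)

/-- Indicator function of a finite subset of `F_2^n`. -/
def ind {n : ℕ} (X : Finset (H n)) (x : H n) : ℝ := if x ∈ X then 1 else 0

/-- Fourier transform on `F_2^n`. -/
def fhat {n : ℕ} (f : H n → ℝ) (ξ : H n) : ℝ := ∑ x, f x * chr x ξ

/-- Density of `X` in `F_2^n`. -/
def density {n : ℕ} (X : Finset (H n)) : ℝ := (X.card : ℝ) / (Fintype.card (H n) : ℝ)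

/-- Average of `f` over `F_2^n`. -/
def havg {n : ℕ} (f : H n → ℝ) : ℝ := (∑ x, f x) / (Fintype.card (H n) : ℝ)

/-- Uniformity norm: the largest normalized nonzero Fourier coefficient. -/
def uniNorm {n : ℕ} (X : Finset (H n)) : ℝ :=
  ⨆ ξ : {ξ : H n // ξ ≠ 0}, |fhat (ind X) ξ.1| / (Fintype.card (H n) : ℝ)

set_option maxHeartbeats 1600000

lemma neg_one_val_add (a b : ZMod 2) : (-1:ℝ)^((a+b).val) = (-1:ℝ)^a.val * (-1:ℝ)^b.val := by
  rw [ZMod.val_add, ← pow_add, ← neg_one_pow_eq_pow_mod_two]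

lemma chr_add_left {n : ℕ} (x y ξ : H n) : chr (x + y) ξ = chr x ξ * chr y ξ := by
  unfold chr
  have : (∑ i, (x + y) i * ξ i) = (∑ i, x i * ξ i) + (∑ i, y i * ξ i) := by
    rw [← Finset.sum_add_distrib]; exact Finset.sum_congr rfl fun i _ => by
      simp [add_mul]
  rw [this, neg_one_val_add]

lemma chr_comm {n : ℕ} (x ξ : H n) : chr x ξ = chr ξ x := by
  have : (∑ i, x i * ξ i) = ∑ i, ξ i * x i := Finset.sum_congr rfl fun i _ => mul_comm _ _
  rw [chr, chr, this]

lemma chr_add_right {n : ℕ} (x ξ η : H n) : chr x (ξ + η) = chr x ξ * chr x η := by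
  rw [chr_comm, chr_add_left, chr_comm ξ x, chr_comm η x]

lemma chr_zero_right {n : ℕ} (x : H n) : chr x 0 = 1 := by
  unfold chr; simp

lemma abs_chr_le {n : ℕ} (x ξ : H n) : |chr x ξ| ≤ 1 := by
  unfold chr; rw [abs_pow, abs_neg, abs_one, one_pow]

lemma sum_chr {n : ℕ} (ξ : H n) :
    ∑ x, chr x ξ = if ξ = 0 then (Fintype.card (H n) : ℝ) else 0 := by
  by_cases h : ξ = 0
  · simp [h, chr_zero_right, Finset.card_univ]
  · simp only [h, if_false]
    obtain ⟨i0, hi0⟩ : ∃ i0, ξ i0 ≠ 0 := by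
      by_contra hc; push_neg at hc; exact h (funext hc)
    have hone : ξ i0 = 1 := (by decide : ∀ a : ZMod 2, a ≠ 0 → a = 1) _ hi0
    set e : H n := Pi.single i0 1 with he
    have hchr : chr e ξ = -1 := by
      unfold chr
      have : (∑ i, e i * ξ i) = ξ i0 := by
        rw [Finset.sum_eq_single i0]
        · simp [he]
        · intro i _ hne; simp [he, Pi.single_eq_of_ne hne]
        · intro hmem; exact absurd (Finset.mem_univ i0) hmem
      rw [this, hone]
      norm_num [ZMod.val_one]
    have hbij : ∑ x, chr x ξ = ∑ x, chr (e + x) ξ :=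
      (Fintype.sum_equiv (Equiv.addLeft e) _ _ (fun x => rfl)).symm
    have : ∑ x, chr x ξ = - ∑ x, chr x ξ := by
      calc ∑ x, chr x ξ = ∑ x, chr (e + x) ξ := hbij
        _ = ∑ x, chr e ξ * chr x ξ := by
            exact Finset.sum_congr rfl fun x _ => by rw [chr_add_left]
        _ = - ∑ x, chr x ξ := by rw [hchr]; simp [Finset.mul_sum]
    linarith

lemma sum_chr_fst {n : ℕ} (z : H n) :
    ∑ ξ, chr z ξ = if z = 0 then (Fintype.card (H n) : ℝ) else 0 := by
  rw [← sum_chr z]; exact Finset.sum_congr rfl fun ξ _ => chr_comm z ξ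

lemma H_add_self {n : ℕ} (z : H n) : z + z = 0 := by
  funext i; exact CharTwo.add_self_eq_zero _

lemma H_add_eq_zero_iff {n : ℕ} (u v : H n) : u + v = 0 ↔ v = u := by
  constructor
  · intro h
    have h2 : u + (u + v) = u + 0 := by rw [h]
    rwa [← add_assoc, H_add_self, zero_add, add_zero] at h2
  · rintro rfl; exact H_add_self _

-- the key correlation identity
lemma cor2 {n : ℕ} (φ ψ : H n → ℝ) (z : H n) :
    (Fintype.card (H n) : ℝ) * ∑ u, φ u * ψ (u + z)
      = ∑ ξ, fhat φ ξ * fhat ψ ξ * chr z ξ := by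
  set N : ℝ := (Fintype.card (H n) : ℝ)
  have step : ∀ ξ : H n, fhat φ ξ * fhat ψ ξ * chr z ξ
      = ∑ u, ∑ v, φ u * ψ v * chr (u + v + z) ξ := by
    intro ξ
    rw [fhat, fhat, Finset.sum_mul_sum, Finset.sum_mul]
    refine Finset.sum_congr rfl fun u _ => ?_
    rw [Finset.sum_mul]
    refine Finset.sum_congr rfl fun v _ => ?_
    rw [chr_add_left, chr_add_left]; ring
  refine Eq.symm ?_
  calc ∑ ξ, fhat φ ξ * fhat ψ ξ * chr z ξ
      = ∑ ξ, ∑ u, ∑ v, φ u * ψ v * chr (u + v + z) ξ :=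
        Finset.sum_congr rfl fun ξ _ => step ξ
    _ = ∑ u, ∑ v, ∑ ξ, φ u * ψ v * chr (u + v + z) ξ := by
        rw [Finset.sum_comm]
        exact Finset.sum_congr rfl fun u _ => Finset.sum_comm
    _ = ∑ u, ∑ v, φ u * ψ v * (if u + v + z = 0 then N else 0) := by
        refine Finset.sum_congr rfl fun u _ => Finset.sum_congr rfl fun v _ => ?_
        rw [← Finset.mul_sum, sum_chr_fst]
    _ = ∑ u, φ u * ψ (u + z) * N := by
        refine Finset.sum_congr rfl fun u _ => ?_
        have hiff : ∀ v : H n, u + v + z = 0 ↔ v = u + z := by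
          intro v
          rw [show u + v + z = (u + z) + v by ring, H_add_eq_zero_iff]
        have hsi : (∑ v, φ u * ψ v * if u + v + z = 0 then N else 0)
             = ∑ v, if v = u + z then φ u * ψ v * N else 0 := by
          refine Finset.sum_congr rfl fun v _ => ?_
          by_cases hv : v = u + z
          · rw [if_pos ((hiff v).mpr hv), if_pos hv]
          · have hnz : ¬(u + v + z = 0) := fun hc => hv ((hiff v).mp hc)
            simp [hv, hnz]
        rw [hsi, Finset.sum_ite_eq' univ (u+z) (fun v => φ u * ψ v * N)]
        simp
    _ = N * ∑ u, φ u * ψ (u + z) := by rw [Finset.mul_sum]; exact Finset.sum_congr rfl fun u _ => by ring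

lemma chr_zero_left {n : ℕ} (ξ : H n) : chr 0 ξ = 1 := by
  rw [chr_comm]; exact chr_zero_right ξ

lemma parseval {n : ℕ} (g : H n → ℝ) :
    ∑ ξ, (fhat g ξ)^2 = (Fintype.card (H n) : ℝ) * ∑ x, (g x)^2 := by
  have h := cor2 g g 0
  simp only [add_zero, chr_zero_left, mul_one] at h
  calc ∑ ξ, (fhat g ξ)^2 = ∑ ξ, fhat g ξ * fhat g ξ :=
        Finset.sum_congr rfl fun ξ _ => sq (fhat g ξ)
    _ = (Fintype.card (H n) : ℝ) * ∑ x, g x * g x := h.symm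
    _ = (Fintype.card (H n) : ℝ) * ∑ x, (g x)^2 := by
        congr 1; exact Finset.sum_congr rfl fun x _ => (sq (g x)).symm

lemma sum_swap4 {α : Type*} [Fintype α] (F : α → α → α → α → ℝ) :
    ∑ x, ∑ y, ∑ z, ∑ w, F x y z w = ∑ z, ∑ w, ∑ x, ∑ y, F x y z w := by
  have h1 : ∑ x, ∑ y, ∑ z, ∑ w, F x y z w = ∑ x, ∑ z, ∑ y, ∑ w, F x y z w :=
    Finset.sum_congr rfl fun x _ => Finset.sum_comm
  have h2 : ∑ x, ∑ z, ∑ y, ∑ w, F x y z w = ∑ z, ∑ x, ∑ y, ∑ w, F x y z w :=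
    Finset.sum_comm
  have h3 : ∑ z, ∑ x, ∑ y, ∑ w, F x y z w = ∑ z, ∑ x, ∑ w, ∑ y, F x y z w :=
    Finset.sum_congr rfl fun z _ => Finset.sum_congr rfl fun x _ => Finset.sum_comm
  have h4 : ∑ z, ∑ x, ∑ w, ∑ y, F x y z w = ∑ z, ∑ w, ∑ x, ∑ y, F x y z w :=
    Finset.sum_congr rfl fun z _ => Finset.sum_comm
  rw [h1, h2, h3, h4]

-- reindexing: sum of f (t + d) over d equals sum of f
lemma sum_shift {n : ℕ} (f : H n → ℝ) (t : H n) : ∑ d, f (t + d) = ∑ d, f d :=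
  Fintype.sum_equiv (Equiv.addLeft t) _ _ (fun d => rfl)

-- ∑_{x,y} φ x φ y chr (x+y) ζ = (fhat φ ζ)^2
lemma hat_sq {n : ℕ} (φ : H n → ℝ) (ζ : H n) :
    ∑ x, ∑ y, φ x * φ y * chr (x + y) ζ = (fhat φ ζ)^2 := by
  rw [sq, fhat, Finset.sum_mul_sum]
  exact Finset.sum_congr rfl fun x _ => Finset.sum_congr rfl fun y _ => by
    rw [chr_add_left]; ring

/-- The core identity. -/
lemma core_id {n : ℕ} (φ g : H n → ℝ) :
    (Fintype.card (H n) : ℝ)^2 * ∑ d, ∑ d', (∑ x, φ x * g (x + d) * g (x + d'))^2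
      = ∑ ξ, ∑ η, (fhat g ξ)^2 * (fhat g η)^2 * (fhat φ (ξ + η))^2 := by
  set N : ℝ := (Fintype.card (H n) : ℝ) with hN
  set c : H n → ℝ := fun z => ∑ u, g u * g (u + z) with hc
  -- Step 1
  have step1 : ∑ d, ∑ d', (∑ x, φ x * g (x + d) * g (x + d'))^2
      = ∑ x, ∑ y, φ x * φ y * (c (x + y) * c (x + y)) := by
    have expand : ∀ d d' : H n, (∑ x, φ x * g (x + d) * g (x + d'))^2
        = ∑ x, ∑ y, (φ x * φ y) * (g (x + d) * g (y + d)) * (g (x + d') * g (y + d')) := by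
      intro d d'
      rw [sq, Finset.sum_mul_sum]
      exact Finset.sum_congr rfl fun x _ => Finset.sum_congr rfl fun y _ => by ring
    calc ∑ d, ∑ d', (∑ x, φ x * g (x + d) * g (x + d'))^2
        = ∑ d, ∑ d', ∑ x, ∑ y, (φ x * φ y) * (g (x + d) * g (y + d)) * (g (x + d') * g (y + d')) :=
          Finset.sum_congr rfl fun d _ => Finset.sum_congr rfl fun d' _ => expand d d'
      _ = ∑ x, ∑ y, ∑ d, ∑ d', (φ x * φ y) * (g (x + d) * g (y + d)) * (g (x + d') * g (y + d')) :=
          (sum_swap4 _).symm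
      _ = ∑ x, ∑ y, φ x * φ y * (c (x + y) * c (x + y)) := by
          refine Finset.sum_congr rfl fun x _ => Finset.sum_congr rfl fun y _ => ?_
          have inner : ∀ d : H n, g (x + d) * g (y + d) = (fun d => g (x + d) * g (y + d)) d := fun _ => rfl
          have hfac : ∑ d, ∑ d', (φ x * φ y) * (g (x + d) * g (y + d)) * (g (x + d') * g (y + d'))
              = (φ x * φ y) * ((∑ d, g (x + d) * g (y + d)) * (∑ d', g (x + d') * g (y + d'))) := by
            rw [Finset.sum_mul_sum]
            rw [Finset.mul_sum]
            refine Finset.sum_congr rfl fun d _ => ?_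
            rw [Finset.mul_sum]
            exact Finset.sum_congr rfl fun d' _ => by ring
          rw [hfac]
          have harg : ∀ d : H n, (x + d) + (x + y) = y + d := fun d => by
            rw [show (x + d) + (x + y) = (y + d) + (x + x) by ring, H_add_self, add_zero]
          have hcor : ∑ d, g (x + d) * g (y + d) = c (x + y) := by
            rw [hc]
            calc ∑ d, g (x + d) * g (y + d)
                = ∑ d, (fun u => g u * g (u + (x + y))) (x + d) := by
                  refine Finset.sum_congr rfl fun d _ => ?_
                  show g (x + d) * g (y + d) = g (x + d) * g ((x + d) + (x + y))
                  rw [harg d]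
              _ = ∑ u, g u * g (u + (x + y)) := sum_shift (fun u => g u * g (u + (x + y))) x
          rw [hcor]
  rw [step1]
  have hNc : ∀ z : H n, N * c z = ∑ ξ, (fhat g ξ)^2 * chr z ξ := by
    intro z
    rw [hc]
    rw [show (fun z => ∑ u, g u * g (u + z)) z = ∑ u, g u * g (u + z) from rfl]
    rw [cor2 g g z]
    exact Finset.sum_congr rfl fun ξ _ => by rw [sq]
  have point : ∀ z : H n, N^2 * (c z * c z)
      = ∑ ξ, ∑ η, (fhat g ξ)^2 * (fhat g η)^2 * chr z (ξ + η) := by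
    intro z
    have h2 : N^2 * (c z * c z) = (N * c z) * (N * c z) := by ring
    rw [h2, hNc z, Finset.sum_mul_sum]
    refine Finset.sum_congr rfl fun ξ _ => Finset.sum_congr rfl fun η _ => ?_
    rw [chr_add_right]; ring
  calc N^2 * ∑ x, ∑ y, φ x * φ y * (c (x+y) * c (x+y))
      = ∑ x, ∑ y, φ x * φ y * (N^2 * (c (x+y) * c (x+y))) := by
        rw [Finset.mul_sum]
        refine Finset.sum_congr rfl fun x _ => ?_
        rw [Finset.mul_sum]
        exact Finset.sum_congr rfl fun y _ => by ring
    _ = ∑ x, ∑ y, ∑ ξ, ∑ η, φ x * φ y * ((fhat g ξ)^2 * (fhat g η)^2 * chr (x+y) (ξ+η)) := by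
        refine Finset.sum_congr rfl fun x _ => Finset.sum_congr rfl fun y _ => ?_
        rw [point (x+y), Finset.mul_sum]
        refine Finset.sum_congr rfl fun ξ _ => ?_
        rw [Finset.mul_sum]
    _ = ∑ ξ, ∑ η, ∑ x, ∑ y, φ x * φ y * ((fhat g ξ)^2 * (fhat g η)^2 * chr (x+y) (ξ+η)) :=
        sum_swap4 _
    _ = ∑ ξ, ∑ η, (fhat g ξ)^2 * (fhat g η)^2 * (fhat φ (ξ+η))^2 := by
        refine Finset.sum_congr rfl fun ξ _ => Finset.sum_congr rfl fun η _ => ?_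
        rw [← hat_sq φ (ξ+η), Finset.mul_sum]
        refine Finset.sum_congr rfl fun x _ => ?_
        rw [Finset.mul_sum]
        exact Finset.sum_congr rfl fun y _ => by ring

lemma Npos {n : ℕ} : (0:ℝ) < (Fintype.card (H n) : ℝ) := by
  exact_mod_cast Fintype.card_pos

lemma core_bound {n : ℕ} (φ g : H n → ℝ) (B : ℝ)
    (hφ : ∀ ζ, |fhat φ ζ| ≤ B) (hg : ∀ x, (g x)^2 ≤ 1) :
    ∑ d, ∑ d', (∑ x, φ x * g (x + d) * g (x + d'))^2
      ≤ B^2 * (Fintype.card (H n) : ℝ)^2 := by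
  set N : ℝ := (Fintype.card (H n) : ℝ) with hN
  have hNpos : (0:ℝ) < N := Npos
  have hB : 0 ≤ B := le_trans (abs_nonneg _) (hφ 0)
  have hpar : ∑ ξ, (fhat g ξ)^2 ≤ N^2 := by
    rw [parseval g]
    have : ∑ x, (g x)^2 ≤ ∑ x : H n, (1:ℝ) := Finset.sum_le_sum fun x _ => hg x
    rw [Finset.sum_const, Finset.card_univ, nsmul_eq_mul, mul_one] at this
    calc N * ∑ x, (g x)^2 ≤ N * N := by
          exact mul_le_mul_of_nonneg_left this (le_of_lt hNpos)
      _ = N^2 := (sq N).symm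
  have key : ∑ ξ, ∑ η, (fhat g ξ)^2 * (fhat g η)^2 * (fhat φ (ξ + η))^2
      ≤ B^2 * N^2 * N^2 := by
    have hstep : ∀ ξ η : H n, (fhat g ξ)^2 * (fhat g η)^2 * (fhat φ (ξ + η))^2
        ≤ (fhat g ξ)^2 * (fhat g η)^2 * B^2 := by
      intro ξ η
      have h1 : (fhat φ (ξ + η))^2 ≤ B^2 := by
        rw [← sq_abs]
        exact pow_le_pow_left₀ (abs_nonneg _) (hφ _) 2
      exact mul_le_mul_of_nonneg_left h1 (by positivity)
    calc ∑ ξ, ∑ η, (fhat g ξ)^2 * (fhat g η)^2 * (fhat φ (ξ + η))^2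
        ≤ ∑ ξ, ∑ η, (fhat g ξ)^2 * (fhat g η)^2 * B^2 :=
          Finset.sum_le_sum fun ξ _ => Finset.sum_le_sum fun η _ => hstep ξ η
      _ = B^2 * ((∑ ξ, (fhat g ξ)^2) * (∑ η, (fhat g η)^2)) := by
          rw [Finset.sum_mul_sum, Finset.mul_sum]
          refine Finset.sum_congr rfl fun ξ _ => ?_
          rw [Finset.mul_sum]
          exact Finset.sum_congr rfl fun η _ => by ring
      _ ≤ B^2 * (N^2 * N^2) := by
          refine mul_le_mul_of_nonneg_left ?_ (by positivity)
          have h0 : 0 ≤ ∑ ξ, (fhat g ξ)^2 := Finset.sum_nonneg fun ξ _ => sq_nonneg _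
          exact mul_le_mul hpar hpar h0 (by positivity)
      _ = B^2 * N^2 * N^2 := by ring
  have hid := core_id φ g
  rw [← hN] at hid
  have : N^2 * ∑ d, ∑ d', (∑ x, φ x * g (x + d) * g (x + d'))^2 ≤ N^2 * (B^2 * N^2) := by
    rw [hid]; calc ∑ ξ, ∑ η, (fhat g ξ)^2 * (fhat g η)^2 * (fhat φ (ξ + η))^2
        ≤ B^2 * N^2 * N^2 := key
      _ = N^2 * (B^2 * N^2) := by ring
  exact le_of_mul_le_mul_left this (by positivity)

lemma bound_WK {n : ℕ} (W K : H n → H n → ℝ) (υ : ℝ) (hυ : 0 ≤ υ)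
    (hW : ∀ d d', |W d d'| ≤ (Fintype.card (H n) : ℝ))
    (hK : ∑ d, ∑ d', (K d d')^2 ≤ υ^2 * (Fintype.card (H n) : ℝ)^4) :
    |∑ d, ∑ d', W d d' * K d d'| ≤ υ * (Fintype.card (H n) : ℝ)^4 := by
  set N : ℝ := (Fintype.card (H n) : ℝ) with hN
  have hNpos : (0:ℝ) < N := Npos
  have habs : |∑ d, ∑ d', W d d' * K d d'| ≤ ∑ d, ∑ d', N * |K d d'| := by
    calc |∑ d, ∑ d', W d d' * K d d'| ≤ ∑ d, |∑ d', W d d' * K d d'| :=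
          Finset.abs_sum_le_sum_abs _ _
      _ ≤ ∑ d, ∑ d', |W d d' * K d d'| :=
          Finset.sum_le_sum fun d _ => Finset.abs_sum_le_sum_abs _ _
      _ ≤ ∑ d, ∑ d', N * |K d d'| := by
          refine Finset.sum_le_sum fun d _ => Finset.sum_le_sum fun d' _ => ?_
          rw [abs_mul]
          exact mul_le_mul_of_nonneg_right (hW d d') (abs_nonneg _)
  have hsum : ∑ d, ∑ d', |K d d'| ≤ υ * N^3 := by
    have hcs : (∑ p : H n × H n, |K p.1 p.2|)^2
        ≤ (∑ _p : H n × H n, (1:ℝ)^2) * ∑ p : H n × H n, |K p.1 p.2|^2 := by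
      have := Finset.sum_mul_sq_le_sq_mul_sq Finset.univ
        (fun _p : H n × H n => (1:ℝ)) (fun p => |K p.1 p.2|)
      simpa using this
    have hc1 : (∑ _p : H n × H n, (1:ℝ)^2) = N^2 := by
      rw [Finset.sum_const, Finset.card_univ, Fintype.card_prod]
      push_cast [hN]
      ring
    have hc2 : ∑ p : H n × H n, |K p.1 p.2|^2 = ∑ d, ∑ d', (K d d')^2 := by
      rw [Fintype.sum_prod_type]
      exact Finset.sum_congr rfl fun d _ => Finset.sum_congr rfl fun d' _ => sq_abs _
    have hflat : ∑ d, ∑ d', |K d d'| = ∑ p : H n × H n, |K p.1 p.2| := by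
      rw [Fintype.sum_prod_type]
    have hS : (∑ d, ∑ d', |K d d'|)^2 ≤ (υ * N^3)^2 := by
      rw [hflat]
      calc (∑ p : H n × H n, |K p.1 p.2|)^2
          ≤ N^2 * ∑ d, ∑ d', (K d d')^2 := by rw [← hc1, ← hc2]; exact hcs
        _ ≤ N^2 * (υ^2 * N^4) := mul_le_mul_of_nonneg_left hK (by positivity)
        _ = (υ * N^3)^2 := by ring
    have h0 : 0 ≤ ∑ d, ∑ d', |K d d'| :=
      Finset.sum_nonneg fun d _ => Finset.sum_nonneg fun d' _ => abs_nonneg _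
    nlinarith [hS, h0, mul_nonneg hυ (pow_nonneg (le_of_lt hNpos) 3)]
  calc |∑ d, ∑ d', W d d' * K d d'| ≤ ∑ d, ∑ d', N * |K d d'| := habs
    _ = N * ∑ d, ∑ d', |K d d'| := by
        rw [Finset.mul_sum]
        exact Finset.sum_congr rfl fun d _ => (Finset.mul_sum _ _ _).symm
    _ ≤ N * (υ * N^3) := mul_le_mul_of_nonneg_left hsum (le_of_lt hNpos)
    _ = υ * N^4 := by ring

lemma sum_shift' {n : ℕ} (f : H n → ℝ) (t : H n) : ∑ d, f (d + t) = ∑ d, f d :=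
  Fintype.sum_equiv (Equiv.addRight t) _ _ (fun d => rfl)

lemma pair_factor {n : ℕ} (A B : H n → ℝ) :
    ∑ x, ∑ y, A x * B y = (∑ x, A x) * (∑ y, B y) := (Finset.sum_mul_sum _ _ _ _).symm

lemma abs_mul_le_one {a b : ℝ} (ha : |a| ≤ 1) (hb : |b| ≤ 1) : |a * b| ≤ 1 := by
  rw [abs_mul]
  exact mul_le_one₀ ha (abs_nonneg b) hb

section Sbounds
variable {n : ℕ}

-- shorthand
local notation "N" => (Fintype.card (H n) : ℝ)

lemma hK_of_core (φ g : H n → ℝ) (υ : ℝ) (hυ : 0 ≤ υ)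
    (hφ : ∀ ζ, |fhat φ ζ| ≤ υ * N) (hg : ∀ x, |g x| ≤ 1) :
    ∑ d, ∑ d', ((fun d d' => ∑ x, φ x * g (x + d) * g (x + d')) d d')^2
      ≤ υ^2 * N^4 := by
  have hg2 : ∀ x, (g x)^2 ≤ 1 := fun x => by
    rw [← sq_abs]; exact pow_le_one₀ (abs_nonneg _) (hg x)
  calc ∑ d, ∑ d', (∑ x, φ x * g (x + d) * g (x + d'))^2
      ≤ (υ*N)^2 * N^2 := core_bound φ g (υ*N) hφ hg2
    _ = υ^2 * N^4 := by ring

lemma S1'_bound (a b g φ : H n → ℝ) (υ : ℝ) (hυ : 0 ≤ υ)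
    (ha : ∀ x, |a x| ≤ 1) (hb : ∀ x, |b x| ≤ 1) (hg : ∀ x, |g x| ≤ 1)
    (hφ : ∀ ζ, |fhat φ ζ| ≤ υ * N) :
    |∑ x, ∑ x', ∑ d, ∑ d', φ x * a x' * b d * b d' *
        g (x+d) * g (x'+d) * g (x+d') * g (x'+d')| ≤ υ * N^4 := by
  rw [sum_swap4]
  set W : H n → H n → ℝ := fun d d' => ∑ x', a x' * b d * b d' * g (x'+d) * g (x'+d') with hW
  set K : H n → H n → ℝ := fun d d' => ∑ x, φ x * g (x + d) * g (x + d') with hK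
  have inner : ∀ d d', (∑ x, ∑ x', φ x * a x' * b d * b d' *
      g (x+d) * g (x'+d) * g (x+d') * g (x'+d')) = W d d' * K d d' := by
    intro d d'
    have : ∀ x x' : H n, φ x * a x' * b d * b d' *
        g (x+d) * g (x'+d) * g (x+d') * g (x'+d')
        = (φ x * g (x + d) * g (x + d')) * (a x' * b d * b d' * g (x'+d) * g (x'+d')) := by
      intro x x'; ring
    rw [Finset.sum_congr rfl fun x _ => Finset.sum_congr rfl fun x' _ => this x x']
    rw [pair_factor, mul_comm]
  rw [Finset.sum_congr rfl fun d _ => Finset.sum_congr rfl fun d' _ => inner d d']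
  refine bound_WK W K υ hυ ?_ (hK_of_core φ g υ hυ hφ hg)
  intro d d'
  calc |W d d'| ≤ ∑ x', |a x' * b d * b d' * g (x'+d) * g (x'+d')| :=
        Finset.abs_sum_le_sum_abs _ _
    _ ≤ ∑ _x' : H n, (1:ℝ) := by
        refine Finset.sum_le_sum fun x' _ => ?_
        exact abs_mul_le_one (abs_mul_le_one (abs_mul_le_one (abs_mul_le_one (ha x') (hb d)) (hb d')) (hg _)) (hg _)
    _ = N := by rw [Finset.sum_const, Finset.card_univ, nsmul_eq_mul, mul_one]

lemma S2'_bound (b g φ : H n → ℝ) (υ : ℝ) (hυ : 0 ≤ υ)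
    (hb : ∀ x, |b x| ≤ 1) (hg : ∀ x, |g x| ≤ 1)
    (hφ : ∀ ζ, |fhat φ ζ| ≤ υ * N) :
    |∑ x, ∑ x', ∑ d, ∑ d', φ x' * b d * b d' *
        g (x+d) * g (x'+d) * g (x+d') * g (x'+d')| ≤ υ * N^4 := by
  rw [sum_swap4]
  set W : H n → H n → ℝ := fun d d' => ∑ x, b d * b d' * g (x+d) * g (x+d') with hW
  set K : H n → H n → ℝ := fun d d' => ∑ x', φ x' * g (x' + d) * g (x' + d') with hK
  have inner : ∀ d d', (∑ x, ∑ x', φ x' * b d * b d' *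
      g (x+d) * g (x'+d) * g (x+d') * g (x'+d')) = W d d' * K d d' := by
    intro d d'
    have : ∀ x x' : H n, φ x' * b d * b d' *
        g (x+d) * g (x'+d) * g (x+d') * g (x'+d')
        = (b d * b d' * g (x+d) * g (x+d')) * (φ x' * g (x' + d) * g (x' + d')) := by
      intro x x'; ring
    rw [Finset.sum_congr rfl fun x _ => Finset.sum_congr rfl fun x' _ => this x x']
    rw [pair_factor]
  rw [Finset.sum_congr rfl fun d _ => Finset.sum_congr rfl fun d' _ => inner d d']
  refine bound_WK W K υ hυ ?_ (hK_of_core φ g υ hυ hφ hg)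
  intro d d'
  calc |W d d'| ≤ ∑ x, |b d * b d' * g (x+d) * g (x+d')| :=
        Finset.abs_sum_le_sum_abs _ _
    _ ≤ ∑ _x : H n, (1:ℝ) := by
        refine Finset.sum_le_sum fun x _ => ?_
        exact abs_mul_le_one (abs_mul_le_one (abs_mul_le_one (hb d) (hb d')) (hg _)) (hg _)
    _ = N := by rw [Finset.sum_const, Finset.card_univ, nsmul_eq_mul, mul_one]

lemma S3'_bound (b g φ : H n → ℝ) (υ : ℝ) (hυ : 0 ≤ υ)
    (hb : ∀ x, |b x| ≤ 1) (hg : ∀ x, |g x| ≤ 1)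
    (hφ : ∀ ζ, |fhat φ ζ| ≤ υ * N) :
    |∑ x, ∑ x', ∑ d, ∑ d', φ d * b d' *
        g (x+d) * g (x'+d) * g (x+d') * g (x'+d')| ≤ υ * N^4 := by
  set W : H n → H n → ℝ := fun x x' => ∑ d', b d' * g (x+d') * g (x'+d') with hW
  set K : H n → H n → ℝ := fun x x' => ∑ d, φ d * g (d + x) * g (d + x') with hK
  have inner : ∀ x x', (∑ d, ∑ d', φ d * b d' *
      g (x+d) * g (x'+d) * g (x+d') * g (x'+d')) = W x x' * K x x' := by
    intro x x'
    have hpt : ∀ d d' : H n, φ d * b d' *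
        g (x+d) * g (x'+d) * g (x+d') * g (x'+d')
        = (φ d * g (d + x) * g (d + x')) * (b d' * g (x+d') * g (x'+d')) := by
      intro d d'
      rw [add_comm d x, add_comm d x']
      ring
    rw [Finset.sum_congr rfl fun d _ => Finset.sum_congr rfl fun d' _ => hpt d d']
    rw [pair_factor, mul_comm]
  rw [Finset.sum_congr rfl fun x _ => Finset.sum_congr rfl fun x' _ => inner x x']
  refine bound_WK W K υ hυ ?_ (hK_of_core φ g υ hυ hφ hg)
  intro x x'
  calc |W x x'| ≤ ∑ d', |b d' * g (x+d') * g (x'+d')| :=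
        Finset.abs_sum_le_sum_abs _ _
    _ ≤ ∑ _d' : H n, (1:ℝ) := by
        refine Finset.sum_le_sum fun d' _ => ?_
        exact abs_mul_le_one (abs_mul_le_one (hb d') (hg _)) (hg _)
    _ = N := by rw [Finset.sum_const, Finset.card_univ, nsmul_eq_mul, mul_one]

lemma S4'_bound (g φ : H n → ℝ) (υ : ℝ) (hυ : 0 ≤ υ)
    (hg : ∀ x, |g x| ≤ 1)
    (hφ : ∀ ζ, |fhat φ ζ| ≤ υ * N) :
    |∑ x, ∑ x', ∑ d, ∑ d', φ d' *
        g (x+d) * g (x'+d) * g (x+d') * g (x'+d')| ≤ υ * N^4 := by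
  set W : H n → H n → ℝ := fun x x' => ∑ d, g (x+d) * g (x'+d) with hW
  set K : H n → H n → ℝ := fun x x' => ∑ d', φ d' * g (d' + x) * g (d' + x') with hK
  have inner : ∀ x x', (∑ d, ∑ d', φ d' *
      g (x+d) * g (x'+d) * g (x+d') * g (x'+d')) = W x x' * K x x' := by
    intro x x'
    have hpt : ∀ d d' : H n, φ d' *
        g (x+d) * g (x'+d) * g (x+d') * g (x'+d')
        = (g (x+d) * g (x'+d)) * (φ d' * g (d' + x) * g (d' + x')) := by
      intro d d'
      rw [add_comm d' x, add_comm d' x']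
      ring
    rw [Finset.sum_congr rfl fun d _ => Finset.sum_congr rfl fun d' _ => hpt d d']
    rw [pair_factor]
  rw [Finset.sum_congr rfl fun x _ => Finset.sum_congr rfl fun x' _ => inner x x']
  refine bound_WK W K υ hυ ?_ (hK_of_core φ g υ hυ hφ hg)
  intro x x'
  calc |W x x'| ≤ ∑ d, |g (x+d) * g (x'+d)| :=
        Finset.abs_sum_le_sum_abs _ _
    _ ≤ ∑ _d : H n, (1:ℝ) := by
        refine Finset.sum_le_sum fun d _ => ?_
        exact abs_mul_le_one (hg _) (hg _)
    _ = N := by rw [Finset.sum_const, Finset.card_univ, nsmul_eq_mul, mul_one]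
end Sbounds

section S5
variable {n : ℕ}
local notation "N" => (Fintype.card (H n) : ℝ)

lemma S5_id (φ g : H n → ℝ) :
    (∑ x, ∑ x', ∑ d, ∑ d', φ (x+d) * g (x'+d) * g (x+d') * g (x'+d'))
      = ∑ ξ, fhat φ ξ * (fhat g ξ)^3 := by
  have hN2 : (N^2 : ℝ) ≠ 0 := by positivity
  refine mul_left_cancel₀ hN2 ?_
  -- step 1: factor the inner double sum
  have harg : ∀ x x' d : H n, (x + d) + (x + x') = x' + d := fun x x' d => by
    rw [show (x + d) + (x + x') = (x' + d) + (x + x) by ring, H_add_self, add_zero]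
  have step1 : ∀ x x' : H n, (∑ d, ∑ d', φ (x+d) * g (x'+d) * (g (x+d') * g (x'+d')))
      = (∑ u, φ u * g (u + (x+x'))) * (∑ u, g u * g (u + (x+x'))) := by
    intro x x'
    rw [show (∑ d, ∑ d', φ (x+d) * g (x'+d) * (g (x+d') * g (x'+d')))
        = (∑ d, φ (x+d) * g (x'+d)) * (∑ d', g (x+d') * g (x'+d')) from by
      rw [← pair_factor]]
    congr 1
    · calc ∑ d, φ (x+d) * g (x'+d)
          = ∑ d, (fun u => φ u * g (u + (x+x'))) (x + d) := by
            refine Finset.sum_congr rfl fun d _ => ?_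
            show φ (x+d) * g (x'+d) = φ (x+d) * g ((x+d) + (x+x'))
            rw [harg x x' d]
        _ = ∑ u, φ u * g (u + (x+x')) := sum_shift (fun u => φ u * g (u + (x+x'))) x
    · calc ∑ d', g (x+d') * g (x'+d')
          = ∑ d', (fun u => g u * g (u + (x+x'))) (x + d') := by
            refine Finset.sum_congr rfl fun d' _ => ?_
            show g (x+d') * g (x'+d') = g (x+d') * g ((x+d') + (x+x'))
            rw [harg x x' d']
        _ = ∑ u, g u * g (u + (x+x')) := sum_shift (fun u => g u * g (u + (x+x'))) x
  calc N^2 * ∑ x, ∑ x', ∑ d, ∑ d', φ (x+d) * g (x'+d) * g (x+d') * g (x'+d')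
      = ∑ x, ∑ x', N^2 * ((∑ u, φ u * g (u + (x+x'))) * (∑ u, g u * g (u + (x+x')))) := by
        rw [Finset.mul_sum]
        refine Finset.sum_congr rfl fun x _ => ?_
        rw [Finset.mul_sum]
        refine Finset.sum_congr rfl fun x' _ => ?_
        rw [← step1 x x']
        congr 1
        exact Finset.sum_congr rfl fun d _ => Finset.sum_congr rfl fun d' _ => by ring
    _ = ∑ x, ∑ x', (∑ ξ, fhat φ ξ * fhat g ξ * chr (x+x') ξ)
          * (∑ η, fhat g η * fhat g η * chr (x+x') η) := by
        refine Finset.sum_congr rfl fun x _ => Finset.sum_congr rfl fun x' _ => ?_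
        rw [← cor2 φ g (x+x'), ← cor2 g g (x+x')]
        ring
    _ = ∑ x, ∑ x', ∑ ξ, ∑ η, (fhat φ ξ * fhat g ξ * (fhat g η * fhat g η))
          * chr (x+x') (ξ+η) := by
        refine Finset.sum_congr rfl fun x _ => Finset.sum_congr rfl fun x' _ => ?_
        rw [Finset.sum_mul_sum]
        refine Finset.sum_congr rfl fun ξ _ => Finset.sum_congr rfl fun η _ => ?_
        rw [chr_add_right]
        ring
    _ = ∑ ξ, ∑ η, ∑ x, ∑ x', (fhat φ ξ * fhat g ξ * (fhat g η * fhat g η))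
          * chr (x+x') (ξ+η) := sum_swap4 _
    _ = ∑ ξ, ∑ η, (fhat φ ξ * fhat g ξ * (fhat g η * fhat g η))
          * (if ξ + η = 0 then N^2 else 0) := by
        refine Finset.sum_congr rfl fun ξ _ => Finset.sum_congr rfl fun η _ => ?_
        have : ∑ x, ∑ x', (fhat φ ξ * fhat g ξ * (fhat g η * fhat g η)) * chr (x+x') (ξ+η)
            = (fhat φ ξ * fhat g ξ * (fhat g η * fhat g η))
              * ((∑ x, chr x (ξ+η)) * (∑ x', chr x' (ξ+η))) := by
          rw [← pair_factor (fun x => chr x (ξ+η)) (fun x' => chr x' (ξ+η))]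
          rw [Finset.mul_sum]
          refine Finset.sum_congr rfl fun x _ => ?_
          rw [Finset.mul_sum]
          refine Finset.sum_congr rfl fun x' _ => ?_
          rw [chr_add_left]
          try ring
        rw [this, sum_chr]
        congr 1
        split_ifs <;> ring
    _ = ∑ ξ, (fhat φ ξ * fhat g ξ * (fhat g ξ * fhat g ξ)) * N^2 := by
        refine Finset.sum_congr rfl fun ξ _ => ?_
        have hiff : ∀ η : H n, ξ + η = 0 ↔ η = ξ := fun η => H_add_eq_zero_iff ξ η
        have : (∑ η, (fhat φ ξ * fhat g ξ * (fhat g η * fhat g η))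
              * (if ξ + η = 0 then N^2 else 0))
            = ∑ η, if η = ξ then (fhat φ ξ * fhat g ξ * (fhat g η * fhat g η)) * N^2 else 0 := by
          refine Finset.sum_congr rfl fun η _ => ?_
          by_cases hv : η = ξ
          · rw [if_pos ((hiff η).mpr hv), if_pos hv]
          · have hnz : ¬(ξ + η = 0) := fun hc => hv ((hiff η).mp hc)
            rw [if_neg hnz, if_neg hv, mul_zero]
        rw [this, Finset.sum_ite_eq' univ ξ
          (fun η => (fhat φ ξ * fhat g ξ * (fhat g η * fhat g η)) * N^2)]
        simp
    _ = N^2 * ∑ ξ, fhat φ ξ * (fhat g ξ)^3 := by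
        rw [Finset.mul_sum]
        exact Finset.sum_congr rfl fun ξ _ => by ring

lemma S5'_bound (g φ : H n → ℝ) (υ : ℝ) (hυ : 0 ≤ υ)
    (hg : ∀ x, |g x| ≤ 1)
    (hgh : ∀ ζ, |fhat g ζ| ≤ N)
    (hφ : ∀ ζ, |fhat φ ζ| ≤ υ * N) :
    |∑ x, ∑ x', ∑ d, ∑ d', φ (x+d) * g (x'+d) * g (x+d') * g (x'+d')| ≤ υ * N^4 := by
  rw [S5_id φ g]
  have hterm : ∀ ξ : H n, |fhat φ ξ * (fhat g ξ)^3| ≤ (υ*N) * (N * (fhat g ξ)^2) := by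
    intro ξ
    have h3 : |(fhat g ξ)^3| = (fhat g ξ)^2 * |fhat g ξ| := by
      rw [pow_succ, abs_mul, abs_of_nonneg (sq_nonneg _)]
    calc |fhat φ ξ * (fhat g ξ)^3| = |fhat φ ξ| * ((fhat g ξ)^2 * |fhat g ξ|) := by
          rw [abs_mul, h3]
      _ ≤ (υ*N) * ((fhat g ξ)^2 * N) := by
          refine mul_le_mul (hφ ξ) ?_ (by positivity) ?_
          · exact mul_le_mul_of_nonneg_left (hgh ξ) (sq_nonneg _)
          · have := Npos (n := n); positivity
      _ = (υ*N) * (N * (fhat g ξ)^2) := by ring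
  have hsumsq : ∑ ξ, (fhat g ξ)^2 ≤ N^2 := by
    rw [parseval g]
    have h1 : ∑ x, (g x)^2 ≤ ∑ _x : H n, (1:ℝ) :=
      Finset.sum_le_sum fun x _ => by
        rw [← sq_abs]; exact pow_le_one₀ (abs_nonneg _) (hg x)
    rw [Finset.sum_const, Finset.card_univ, nsmul_eq_mul, mul_one] at h1
    calc N * ∑ x, (g x)^2 ≤ N * N :=
          mul_le_mul_of_nonneg_left h1 (le_of_lt Npos)
      _ = N^2 := (sq _).symm
  calc |∑ ξ, fhat φ ξ * (fhat g ξ)^3| ≤ ∑ ξ, |fhat φ ξ * (fhat g ξ)^3| :=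
        Finset.abs_sum_le_sum_abs _ _
    _ ≤ ∑ ξ, (υ*N) * (N * (fhat g ξ)^2) := Finset.sum_le_sum fun ξ _ => hterm ξ
    _ = (υ*N) * (N * ∑ ξ, (fhat g ξ)^2) := by
        rw [← Finset.mul_sum]
        congr 1
        rw [← Finset.mul_sum]
    _ ≤ (υ*N) * (N * N^2) := by
        refine mul_le_mul_of_nonneg_left ?_ (by positivity)
        exact mul_le_mul_of_nonneg_left hsumsq (le_of_lt Npos)
    _ = υ * N^4 := by ring

-- vanishing lemmas
lemma Z8 (φ : H n → ℝ) (hφ0 : ∑ u, φ u = 0) :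
    ∑ x : H n, ∑ x' : H n, ∑ d : H n, ∑ d', φ (x'+d') = 0 := by
  have h : ∀ x' : H n, ∑ d', φ (x'+d') = 0 := fun x' => by rw [sum_shift φ x']; exact hφ0
  simp [h]

lemma Z7 (g φ : H n → ℝ) (hφ0 : ∑ u, φ u = 0) :
    ∑ x : H n, ∑ x', ∑ d : H n, ∑ d', φ (x+d') * g (x'+d') = 0 := by
  rw [sum_swap4]
  have h : ∀ d' : H n, ∑ x, ∑ x', φ (x+d') * g (x'+d') = 0 := by
    intro d'
    rw [pair_factor (fun x => φ (x+d')) (fun x' => g (x'+d'))]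
    rw [sum_shift' φ d', hφ0, zero_mul]
  simp [h]

lemma Z6 (g φ : H n → ℝ) (hφ0 : ∑ u, φ u = 0) :
    ∑ x : H n, ∑ x', ∑ d, ∑ d', φ (x'+d) * (g (x+d') * g (x'+d')) = 0 := by
  have h : ∀ x x' : H n, ∑ d, ∑ d', φ (x'+d) * (g (x+d') * g (x'+d')) = 0 := by
    intro x x'
    rw [pair_factor (fun d => φ (x'+d)) (fun d' => g (x+d') * g (x'+d'))]
    rw [sum_shift φ x', hφ0, zero_mul]
  simp [h]
end S5

section Sfacts
variable {n : ℕ}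
local notation "N" => (Fintype.card (H n) : ℝ)

lemma ind_abs_le (S : Finset (H n)) : ∀ x, |ind S x| ≤ 1 := by
  intro x; unfold ind; split <;> norm_num

lemma sum_ind (S : Finset (H n)) : ∑ x, ind S x = (S.card : ℝ) := by
  unfold ind
  rw [Finset.sum_ite_mem, Finset.univ_inter, Finset.sum_const, nsmul_eq_mul, mul_one]

lemma density_nonneg (S : Finset (H n)) : 0 ≤ density S := by
  unfold density; positivity

lemma density_le_one (S : Finset (H n)) : density S ≤ 1 := by
  unfold density
  rw [div_le_one Npos]
  exact_mod_cast Finset.card_le_univ S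

lemma abs_density_le_one (S : Finset (H n)) : |density S| ≤ 1 := by
  rw [abs_of_nonneg (density_nonneg S)]; exact density_le_one S

lemma uniNorm_nonneg (X : Finset (H n)) : 0 ≤ uniNorm X := by
  rcases isEmpty_or_nonempty {ξ : H n // ξ ≠ 0} with hE | hNE
  · unfold uniNorm
    rw [iSup_of_empty']
    rw [Real.sSup_empty]
  · obtain ⟨ξ0⟩ := hNE
    refine le_trans ?_ (le_ciSup (Set.Finite.bddAbove (Set.finite_range _)) ξ0)
    positivity

lemma fhat_le_of_uniNorm (X : Finset (H n)) (υ : ℝ) (h : uniNorm X ≤ υ)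
    (ζ : H n) (hζ : ζ ≠ 0) : |fhat (ind X) ζ| ≤ υ * N := by
  have h1 : |fhat (ind X) ζ| / N ≤ uniNorm X := by
    unfold uniNorm
    exact le_ciSup (Set.Finite.bddAbove (Set.finite_range
      (fun ξ : {ξ : H n // ξ ≠ 0} => |fhat (ind X) ξ.1| / N))) ⟨ζ, hζ⟩
  have h2 : |fhat (ind X) ζ| / N ≤ υ := le_trans h1 h
  calc |fhat (ind X) ζ| = (|fhat (ind X) ζ| / N) * N := by
        field_simp
    _ ≤ υ * N := mul_le_mul_of_nonneg_right h2 (le_of_lt Npos)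

lemma fhat_abs_le_card (f : H n → ℝ) (hf : ∀ x, |f x| ≤ 1) (ζ : H n) :
    |fhat f ζ| ≤ N := by
  calc |fhat f ζ| ≤ ∑ x, |f x * chr x ζ| := Finset.abs_sum_le_sum_abs _ _
    _ ≤ ∑ _x : H n, (1:ℝ) :=
        Finset.sum_le_sum fun x _ => abs_mul_le_one (hf x) (abs_chr_le x ζ)
    _ = N := by rw [Finset.sum_const, Finset.card_univ, nsmul_eq_mul, mul_one]

lemma fhat_ind_zero (X : Finset (H n)) : fhat (ind X) 0 = (X.card : ℝ) := by
  unfold fhat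
  rw [Finset.sum_congr rfl fun x _ => by rw [chr_zero_right, mul_one]]
  exact sum_ind X

lemma fhat_balanced (X : Finset (H n)) (ζ : H n) :
    fhat (fun x => ind X x - density X) ζ
      = fhat (ind X) ζ - density X * (if ζ = 0 then N else 0) := by
  unfold fhat
  rw [show (∑ x, (ind X x - density X) * chr x ζ)
      = ∑ x, (ind X x * chr x ζ - density X * chr x ζ) from
    Finset.sum_congr rfl fun x _ => by ring]
  rw [Finset.sum_sub_distrib, ← Finset.mul_sum, sum_chr]

lemma balanced_bound (X : Finset (H n)) (υ : ℝ) (h : uniNorm X ≤ υ) (hυ : 0 ≤ υ)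
    (ζ : H n) : |fhat (fun x => ind X x - density X) ζ| ≤ υ * N := by
  rw [fhat_balanced]
  by_cases hζ : ζ = 0
  · rw [if_pos hζ, hζ, fhat_ind_zero]
    have : (X.card : ℝ) - density X * N = 0 := by
      unfold density
      rw [div_mul_cancel₀ _ (ne_of_gt (Npos (n := n))), sub_self]
    rw [this, abs_zero]
    have := Npos (n := n)
    positivity
  · rw [if_neg hζ, mul_zero, sub_zero]
    exact fhat_le_of_uniNorm X υ h ζ hζ

lemma balanced_sum_zero (X : Finset (H n)) :
    ∑ u, (ind X u - density X) = 0 := by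
  rw [Finset.sum_sub_distrib, sum_ind, Finset.sum_const, Finset.card_univ, nsmul_eq_mul]
  unfold density
  field_simp
  ring

end Sfacts

/-- The normalized box-norm count in the coordinates `(e₁, e₁+e₂)` equals
`δ_X² δ_D² δ_Y⁴` up to `C·υ` for an absolute constant `C`. -/
theorem stmt_10 :
    ∃ C : ℝ, 0 < C ∧ ∀ (n : ℕ) (X Y D : Finset (H n)) (υ : ℝ),
      uniNorm X ≤ υ → uniNorm Y ≤ υ → uniNorm D ≤ υ →
      |(∑ x, ∑ x', ∑ d, ∑ d', ind X x * ind X x' * ind D d * ind D d' *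
            ind Y (x + d) * ind Y (x' + d) * ind Y (x + d') * ind Y (x' + d')) /
          (Fintype.card (H n) : ℝ) ^ 4
          - density X ^ 2 * density D ^ 2 * density Y ^ 4| ≤ C * υ := by
  refine ⟨5, by norm_num, ?_⟩
  intro n X Y D υ hX hY hD
  have hυ0 : 0 ≤ υ := le_trans (uniNorm_nonneg X) hX
  set N : ℝ := (Fintype.card (H n) : ℝ) with hNdef
  have hN : (0:ℝ) < N := Npos
  set a : H n → ℝ := ind X with hadef
  set b : H n → ℝ := ind D with hbdef
  set g : H n → ℝ := ind Y with hgdef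
  set p : ℝ := density X with hpdef
  set q : ℝ := density D with hqdef
  set r : ℝ := density Y with hrdef
  set φa : H n → ℝ := fun t => a t - p with hφadef
  set φb : H n → ℝ := fun t => b t - q with hφbdef
  set φg : H n → ℝ := fun t => g t - r with hφgdef
  have hfa : ∀ ζ, |fhat φa ζ| ≤ υ * N := fun ζ => balanced_bound X υ hX hυ0 ζ
  have hfb : ∀ ζ, |fhat φb ζ| ≤ υ * N := fun ζ => balanced_bound D υ hD hυ0 ζ
  have hfg : ∀ ζ, |fhat φg ζ| ≤ υ * N := fun ζ => balanced_bound Y υ hY hυ0 ζ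
  have hga : ∀ x, |g x| ≤ 1 := ind_abs_le Y
  have haa : ∀ x, |a x| ≤ 1 := ind_abs_le X
  have hba : ∀ x, |b x| ≤ 1 := ind_abs_le D
  have hfgN : ∀ ζ, |fhat g ζ| ≤ N := fhat_abs_le_card g hga
  have hφg0 : ∑ u, φg u = 0 := balanced_sum_zero Y
  set T : ℝ := ∑ x, ∑ x', ∑ d, ∑ d', a x * a x' * b d * b d' *
      g (x + d) * g (x' + d) * g (x + d') * g (x' + d') with hTdef
  have hconst : (∑ _x : H n, ∑ _x' : H n, ∑ _d : H n, ∑ _d' : H n, p^2*q^2*r^4)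
      = N^4 * (p^2*q^2*r^4) := by
    rw [Finset.sum_const, Finset.sum_const, Finset.sum_const, Finset.sum_const,
      Finset.card_univ]
    simp only [nsmul_eq_mul]
    ring
  have tele : ∀ x x' d d' : H n,
      a x * a x' * b d * b d' * g (x+d) * g (x'+d) * g (x+d') * g (x'+d') - p^2*q^2*r^4
      = (φa x * a x' * b d * b d' * g (x+d) * g (x'+d) * g (x+d') * g (x'+d'))
      + p * (φa x' * b d * b d' * g (x+d) * g (x'+d) * g (x+d') * g (x'+d'))
      + (p*p) * (φb d * b d' * g (x+d) * g (x'+d) * g (x+d') * g (x'+d'))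
      + (p*p*q) * (φb d' * g (x+d) * g (x'+d) * g (x+d') * g (x'+d'))
      + (p*p*q*q) * (φg (x+d) * g (x'+d) * g (x+d') * g (x'+d'))
      + (p*p*q*q*r) * (φg (x'+d) * (g (x+d') * g (x'+d')))
      + (p*p*q*q*r*r) * (φg (x+d') * g (x'+d'))
      + (p*p*q*q*r*r*r) * (φg (x'+d')) := by
    intro x x' d d'
    simp only [hφadef, hφbdef, hφgdef]
    ring
  have split : T - N^4 * (p^2*q^2*r^4)
      = (∑ x, ∑ x', ∑ d, ∑ d', φa x * a x' * b d * b d' *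
          g (x+d) * g (x'+d) * g (x+d') * g (x'+d'))
      + p * (∑ x, ∑ x', ∑ d, ∑ d', φa x' * b d * b d' *
          g (x+d) * g (x'+d) * g (x+d') * g (x'+d'))
      + (p*p) * (∑ x, ∑ x', ∑ d, ∑ d', φb d * b d' *
          g (x+d) * g (x'+d) * g (x+d') * g (x'+d'))
      + (p*p*q) * (∑ x, ∑ x', ∑ d, ∑ d', φb d' *
          g (x+d) * g (x'+d) * g (x+d') * g (x'+d'))
      + (p*p*q*q) * (∑ x, ∑ x', ∑ d, ∑ d', φg (x+d) * g (x'+d) * g (x+d') * g (x'+d'))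
      + (p*p*q*q*r) * (∑ x, ∑ x', ∑ d, ∑ d', φg (x'+d) * (g (x+d') * g (x'+d')))
      + (p*p*q*q*r*r) * (∑ x, ∑ x', ∑ d : H n, ∑ d', φg (x+d') * g (x'+d'))
      + (p*p*q*q*r*r*r) * (∑ x : H n, ∑ x' : H n, ∑ d : H n, ∑ d', φg (x'+d')) := by
    rw [hTdef, ← hconst]
    simp only [← Finset.sum_sub_distrib]
    simp only [tele]
    simp only [Finset.sum_add_distrib, ← Finset.mul_sum]
  have bound1 := S1'_bound a b g φa υ hυ0 haa hba hga hfa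
  have bound2 := S2'_bound b g φa υ hυ0 hba hga hfa
  have bound3 := S3'_bound b g φb υ hυ0 hba hga hfb
  have bound4 := S4'_bound g φb υ hυ0 hga hfb
  have bound5 := S5'_bound g φg υ hυ0 hga hfgN hfg
  have z6 := Z6 g φg hφg0
  have z7 := Z7 g φg hφg0
  have z8 := Z8 φg hφg0
  have hkey : |T - N^4 * (p^2*q^2*r^4)| ≤ 5 * υ * N^4 := by
    rw [split, z6, z7, z8, mul_zero, mul_zero, mul_zero, add_zero, add_zero, add_zero]
    have hp : |p| ≤ 1 := abs_density_le_one X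
    have hq : |q| ≤ 1 := abs_density_le_one D
    have hr : |r| ≤ 1 := abs_density_le_one Y
    have hcb : ∀ c U : ℝ, |c| ≤ 1 → |U| ≤ υ * N^4 → |c * U| ≤ υ * N^4 := by
      intro c U hc hU
      rw [abs_mul]
      calc |c| * |U| ≤ 1 * (υ * N^4) :=
            mul_le_mul hc hU (abs_nonneg _) zero_le_one
        _ = υ * N^4 := one_mul _
    have h2 : |p| ≤ 1 := hp
    have e2 : |p * (∑ x, ∑ x', ∑ d, ∑ d', φa x' * b d * b d' *
        g (x+d) * g (x'+d) * g (x+d') * g (x'+d'))| ≤ υ * N^4 := hcb _ _ hp bound2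
    have e3 : |(p*p) * (∑ x, ∑ x', ∑ d, ∑ d', φb d * b d' *
        g (x+d) * g (x'+d) * g (x+d') * g (x'+d'))| ≤ υ * N^4 :=
      hcb _ _ (abs_mul_le_one hp hp) bound3
    have e4 : |(p*p*q) * (∑ x, ∑ x', ∑ d, ∑ d', φb d' *
        g (x+d) * g (x'+d) * g (x+d') * g (x'+d'))| ≤ υ * N^4 :=
      hcb _ _ (abs_mul_le_one (abs_mul_le_one hp hp) hq) bound4
    have e5 : |(p*p*q*q) * (∑ x, ∑ x', ∑ d, ∑ d', φg (x+d) * g (x'+d) *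
        g (x+d') * g (x'+d'))| ≤ υ * N^4 :=
      hcb _ _ (abs_mul_le_one (abs_mul_le_one (abs_mul_le_one hp hp) hq) hq) bound5
    set E1 := (∑ x, ∑ x', ∑ d, ∑ d', φa x * a x' * b d * b d' *
        g (x+d) * g (x'+d) * g (x+d') * g (x'+d'))
    set E2 := p * (∑ x, ∑ x', ∑ d, ∑ d', φa x' * b d * b d' *
        g (x+d) * g (x'+d) * g (x+d') * g (x'+d'))
    set E3 := (p*p) * (∑ x, ∑ x', ∑ d, ∑ d', φb d * b d' *
        g (x+d) * g (x'+d) * g (x+d') * g (x'+d'))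
    set E4 := (p*p*q) * (∑ x, ∑ x', ∑ d, ∑ d', φb d' *
        g (x+d) * g (x'+d) * g (x+d') * g (x'+d'))
    set E5 := (p*p*q*q) * (∑ x, ∑ x', ∑ d, ∑ d', φg (x+d) * g (x'+d) *
        g (x+d') * g (x'+d'))
    have t1 := abs_add_le (E1 + E2 + E3 + E4) E5
    have t2 := abs_add_le (E1 + E2 + E3) E4
    have t3 := abs_add_le (E1 + E2) E3
    have t4 := abs_add_le E1 E2
    have := bound1
    linarith
  have hN4 : (0:ℝ) < N^4 := by positivity
  have hrew : T / N^4 - p^2 * q^2 * r^4 = (T - N^4 * (p^2*q^2*r^4)) / N^4 := by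
    field_simp
  rw [hrew, abs_div, abs_of_pos hN4, div_le_iff₀ hN4]
  calc |T - N^4 * (p^2*q^2*r^4)| ≤ 5 * υ * N^4 := hkey
    _ = 5 * υ * N^4 := rfl
end
end

section
/- Let H = F_2^n with dim H = n, let U ⊆ H with density δ_U > 0, and let 0 < t, u < 1 with n ≥ 10/(t u²). Then there exists a partition P of H into affine subspaces, each of dimension at least n − 4/(t u²), and a subcollection N ⊆ P, such that for every V ∈ P \ N the set U ∩ V is u-uniform relative to V (i.e., ‖U ∩ V‖_Uni, computed via the Fourier transform on the subspace parallel to V, is at most u), and the union of the cells in N has density at most t·δ_U in H. -/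
open Finset

noncomputable section

/-- Dot product on `F_2^n`. -/
def dotp {n : ℕ} (x ξ : H n) : ZMod 2 := ∑ i, x i * ξ i

/-- Uniformity norm of a set `X` contained in the affine subspace `v + W`,
relative to that affine subspace: the sup over characters `ξ` that are
nontrivial on `W` of the normalized Fourier coefficient of `X` based at `v`. -/
def relUniNorm {n : ℕ} (X : Finset (H n)) (W : Submodule (ZMod 2) (H n)) (v : H n) : ℝ :=
  ⨆ ξ : {ξ : H n // ∃ w ∈ W, dotp w ξ ≠ 0},
    |∑ x ∈ X, chr (x - v) ξ.1| / (Nat.card W : ℝ)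

/-!
Energy increment. The energy `∑_C |U ∩ C|² / |C|` of a partition of `F₂ⁿ` is at most `|U|`.
If `U ∩ C` has a Fourier coefficient `ξ` larger than `u |C|` relative to a cell `C = v + W`,
cutting `C` into the two cosets of `W ∩ ξ^⊥` turns that coefficient into the difference of the
counts of `U` on the halves, and the parallelogram law raises the energy by at least `u² |C|`.
So while the nonuniform cells cover more than `t |U|` points, splitting all of them at once
raises the energy by more than `t u² |U|` at the cost of one dimension; this can happen at most
`⌈1 / (t u²)⌉ ≤ 2 / (t u²)` times.
-/

section Coset

variable {K V : Type*} [Ring K] [AddCommGroup V] [Module K V]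

def IsCoset (C : Finset V) (W : Submodule K V) (v : V) : Prop :=
  ∀ x, x ∈ C ↔ x - v ∈ W

variable {C : Finset V} {W W' : Submodule K V} {v v' : V}

lemma IsCoset.base_mem (h : IsCoset C W v) : v ∈ C := (h v).2 (by simp)

lemma IsCoset.le (h : IsCoset C W v) (h' : IsCoset C W' v') : W ≤ W' := fun w hw => by
  have hw' := (h' (w + v)).1 ((h _).2 (by simpa using hw))
  simpa using W'.sub_mem hw' ((h' v).1 h.base_mem)

lemma IsCoset.direction_unique (h : IsCoset C W v) (h' : IsCoset C W' v') : W = W' :=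
  le_antisymm (h.le h') (h'.le h)

lemma IsCoset.card_eq (h : IsCoset C W v) : #C = Nat.card W := by
  rw [← Nat.card_eq_finsetCard]
  exact Nat.card_congr
    { toFun x := ⟨x - v, (h x).1 x.2⟩
      invFun w := ⟨w + v, (h _).2 (by simp)⟩
      left_inv x := by ext; simp
      right_inv w := by ext; simp }

lemma IsCoset.filter_eq_zero [DecidableEq K] (h : IsCoset C W v) (f : Module.Dual K V) :
    IsCoset (C.filter (fun x => f (x - v) = 0)) (W ⊓ LinearMap.ker f) v := fun x => by
  simp [h x]

end Coset

section ZModTwo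

variable {V : Type*} [AddCommGroup V] [Module (ZMod 2) V] {C : Finset V}
  {W : Submodule (ZMod 2) V} {v w : V}

lemma IsCoset.filter_ne_zero (h : IsCoset C W v) (f : Module.Dual (ZMod 2) V) (hw : w ∈ W)
    (hfw : f w ≠ 0) :
    IsCoset (C.filter (fun x => f (x - v) ≠ 0)) (W ⊓ LinearMap.ker f) (v + w) := fun x => by
  have hsub : x - (v + w) = (x - v) - w := by abel
  have hne_zero : ∀ a : ZMod 2, a ≠ 0 ↔ a = 1 := by decide
  simp only [Finset.mem_filter, h x, hsub, Submodule.mem_inf, LinearMap.mem_ker, map_sub,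
    W.sub_mem_iff_left hw, sub_eq_zero, (hne_zero _).mp hfw, hne_zero]

end ZModTwo

lemma Submodule.finrank_inf_ker_add_one {K V : Type*} [Field K] [AddCommGroup V] [Module K V]
    [FiniteDimensional K V] {W : Submodule K V} {f : Module.Dual K V} {w : V} (hw : w ∈ W)
    (hfw : f w ≠ 0) : Module.finrank K ↥(W ⊓ LinearMap.ker f) + 1 = Module.finrank K W := by
  have hf : f.domRestrict W ≠ 0 := fun h => hfw (by simpa using LinearMap.congr_fun h ⟨w, hw⟩)
  rw [← Module.Dual.finrank_ker_add_one_of_ne_zero hf, LinearMap.ker_domRestrict,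
    ← Submodule.map_comap_subtype, Submodule.finrank_map_subtype_eq]

section Energy

variable {α : Type*} [DecidableEq α]

-- `|C|` times the squared density of `U` in `C`: summed over a partition, `|H|` times the
-- mean-square density.
def cellEnergy (U C : Finset α) : ℝ := (#(U ∩ C) : ℝ) ^ 2 / #C

def energy {S : Finset α} (U : Finset α) (P : Finpartition S) : ℝ :=
  ∑ C ∈ P.parts, cellEnergy U C

variable {S : Finset α} (U : Finset α)

lemma cellEnergy_le_card_inter (C : Finset α) : cellEnergy U C ≤ #(U ∩ C) := by
  have hle : (#(U ∩ C) : ℝ) ≤ #C := by exact_mod_cast card_le_card inter_subset_right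
  exact div_le_of_le_mul₀ (by positivity) (by positivity) (by nlinarith)

lemma energy_nonneg (P : Finpartition S) : 0 ≤ energy U P :=
  sum_nonneg fun _ _ => by unfold cellEnergy; positivity

lemma energy_le_card (P : Finpartition S) (hU : U ⊆ S) : energy U P ≤ #U := by
  have hsum : ∑ C ∈ P.parts, #(U ∩ C) = #U := by
    simp_rw [inter_comm U]
    rw [← (P.restrict hU).sum_card_parts]
    exact (P.sum_restrict hU card card_empty).symm
  calc energy U P ≤ ∑ C ∈ P.parts, (#(U ∩ C) : ℝ) :=
        sum_le_sum fun C _ => cellEnergy_le_card_inter U C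
    _ = #U := by exact_mod_cast hsum

lemma energy_indiscrete (hS : S ≠ ∅) :
    energy U (Finpartition.indiscrete hS) = cellEnergy U S := by
  simp [energy]

lemma energy_extend {A B : Finset α} (P : Finpartition A) (hB : B ≠ ∅) (hAB : Disjoint A B)
    (hS : A ∪ B = S) : energy U (P.extend hB hAB hS) = cellEnergy U B + energy U P := by
  have hBP : B ∉ P.parts := fun hBP =>
    hB (disjoint_self.mp (hAB.mono_left (P.le hBP)))
  simp [energy, sum_insert hBP]

lemma energy_bind (P : Finpartition S) (Q : ∀ C ∈ P.parts, Finpartition C) :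
    energy U (P.bind Q) = ∑ C ∈ P.parts.attach, energy U (Q C.1 C.2) :=
  Finpartition.sum_combine _ P.supIndep.attach _

end Energy

section Fourier

variable {n : ℕ}

def dotpDual (ξ : H n) : Module.Dual (ZMod 2) (H n) where
  toFun x := dotp x ξ
  map_add' x y := add_dotProduct x y ξ
  map_smul' c x := smul_dotProduct c x ξ

lemma chr_eq_ite (x ξ : H n) : chr x ξ = if dotp x ξ = 0 then 1 else -1 := by
  change (-1 : ℝ) ^ (dotp x ξ).val = _
  rcases (by decide : ∀ a : ZMod 2, a = 0 ∨ a = 1) (dotp x ξ) with h | h <;>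
    simp [h, ZMod.val_one]

lemma sum_chr_eq (X : Finset (H n)) (v ξ : H n) :
    ∑ x ∈ X, chr (x - v) ξ =
      #(X.filter (fun x => dotp (x - v) ξ = 0)) -
        #(X.filter (fun x => dotp (x - v) ξ ≠ 0)) := by
  simp [chr_eq_ite, sum_ite, sub_eq_add_neg]

lemma exists_lt_of_lt_relUniNorm {X : Finset (H n)} {W : Submodule (ZMod 2) (H n)} {v : H n}
    {u : ℝ} (hu : 0 ≤ u) (h : u < relUniNorm X W v) :
    ∃ ξ w, w ∈ W ∧ dotp w ξ ≠ 0 ∧ u * Nat.card W < |∑ x ∈ X, chr (x - v) ξ| := by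
  have : Nonempty {ξ : H n // ∃ w ∈ W, dotp w ξ ≠ 0} := by
    by_contra! hempty
    rw [relUniNorm, Real.iSup_of_isEmpty] at h
    linarith
  obtain ⟨⟨ξ, w, hw, hwξ⟩, hξ⟩ := exists_lt_of_lt_ciSup h
  exact ⟨ξ, w, hw, hwξ, (lt_div_iff₀ (by exact_mod_cast Nat.card_pos)).mp hξ⟩

end Fourier

lemma add_sq_div_add_sq_mul_le {a b m c : ℝ} (hm : 0 < m) (hc : 0 ≤ c)
    (h : c * (2 * m) ≤ |a - b|) :
    (a + b) ^ 2 / (2 * m) + c ^ 2 * (2 * m) ≤ a ^ 2 / m + b ^ 2 / m := by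
  have hsq : (c * (2 * m)) ^ 2 ≤ (a - b) ^ 2 := by
    rw [← sq_abs (a - b)]
    exact pow_le_pow_left₀ (by positivity) h 2
  have hgain : c ^ 2 * (2 * m) ≤ (a - b) ^ 2 / (2 * m) := by
    rw [le_div_iff₀ (by positivity)]
    linarith
  calc (a + b) ^ 2 / (2 * m) + c ^ 2 * (2 * m)
      ≤ (a + b) ^ 2 / (2 * m) + (a - b) ^ 2 / (2 * m) := by gcongr
    _ = a ^ 2 / m + b ^ 2 / m := by field_simp; ring

section Splitting

variable {n : ℕ} {U C : Finset (H n)} {W : Submodule (ZMod 2) (H n)} {v : H n} {u : ℝ}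

lemma IsCoset.exists_split (hC : IsCoset C W v) (hu : 0 ≤ u) (h : u < relUniNorm (U ∩ C) W v) :
    ∃ (W' : Submodule (ZMod 2) (H n)) (Q : Finpartition C),
      Module.finrank (ZMod 2) W' + 1 = Module.finrank (ZMod 2) W ∧
      (∀ D ∈ Q.parts, ∃ v', IsCoset D W' v') ∧
      cellEnergy U C + u ^ 2 * #C ≤ energy U Q := by
  obtain ⟨ξ, w, hw, hwξ, hlt⟩ := exists_lt_of_lt_relUniNorm hu h
  set f := dotpDual ξ
  set C₁ := C.filter (fun x => f (x - v) = 0)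
  set C₂ := C.filter (fun x => f (x - v) ≠ 0)
  have h₁ : IsCoset C₁ (W ⊓ LinearMap.ker f) v := hC.filter_eq_zero f
  have h₂ : IsCoset C₂ (W ⊓ LinearMap.ker f) (v + w) := hC.filter_ne_zero f hw hwξ
  have hdisj : Disjoint C₁ C₂ := disjoint_filter_filter_not C C _
  have hunion : C₁ ∪ C₂ = C := filter_union_filter_not_eq _ C
  refine ⟨_, (Finpartition.indiscrete (ne_empty_of_mem h₁.base_mem)).extend
    (ne_empty_of_mem h₂.base_mem) hdisj hunion,
    Submodule.finrank_inf_ker_add_one (f := f) hw hwξ, ?_, ?_⟩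
  · simp only [Finpartition.extend_parts, Finpartition.indiscrete_parts, mem_insert, mem_singleton]
    rintro D (rfl | rfl)
    exacts [⟨_, h₂⟩, ⟨_, h₁⟩]
  · rw [energy_extend, energy_indiscrete]
    set m : ℝ := (Nat.card ↥(W ⊓ LinearMap.ker f) : ℝ)
    have hm : 0 < m := Nat.cast_pos.mpr Nat.card_pos
    have hC₁ : (#C₁ : ℝ) = m := by rw [h₁.card_eq]
    have hC₂ : (#C₂ : ℝ) = m := by rw [h₂.card_eq]
    have hCm : (#C : ℝ) = 2 * m := by
      rw [← hunion, card_union_of_disjoint hdisj]; push_cast; rw [hC₁, hC₂]; ring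
    have hUC : (#(U ∩ C) : ℝ) = #(U ∩ C₁) + #(U ∩ C₂) := by
      rw [← hunion, inter_union_distrib_left, card_union_of_disjoint
        (hdisj.mono inter_subset_right inter_subset_right)]; push_cast; rfl
    have hsum : ∑ x ∈ U ∩ C, chr (x - v) ξ = #(U ∩ C₁) - #(U ∩ C₂) := by
      rw [sum_chr_eq, inter_filter, inter_filter]; rfl
    rw [← hC.card_eq, hCm, hsum] at hlt
    unfold cellEnergy
    rw [hUC, hCm, hC₁, hC₂, add_comm (_ / m)]
    exact add_sq_div_add_sq_mul_le hm hu hlt.le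

end Splitting

section Refinement

variable {n : ℕ}

def IsAffineCell (d : ℝ) (C : Finset (H n)) : Prop :=
  ∃ (W : Submodule (ZMod 2) (H n)) (v : H n), IsCoset C W v ∧ d ≤ Module.finrank (ZMod 2) W

def IsUniformCell (u : ℝ) (U C : Finset (H n)) : Prop :=
  ∀ (W : Submodule (ZMod 2) (H n)) (v : H n), IsCoset C W v → relUniNorm (U ∩ C) W v ≤ u

open Classical in
def nonuniformParts (u : ℝ) (U : Finset (H n)) {S : Finset (H n)} (P : Finpartition S) :
    Finset (Finset (H n)) :=
  P.parts.filter (fun C => ¬ IsUniformCell u U C)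

variable (U : Finset (H n)) (u : ℝ) {d : ℝ} {C : Finset (H n)}

lemma mem_nonuniformParts {S : Finset (H n)} {P : Finpartition S} :
    C ∈ nonuniformParts u U P ↔ C ∈ P.parts ∧ ¬ IsUniformCell u U C := by
  classical
  simp [nonuniformParts]

lemma IsAffineCell.mono {d' : ℝ} (h : IsAffineCell d C) (hd : d' ≤ d) : IsAffineCell d' C :=
  let ⟨W, v, hC, hW⟩ := h
  ⟨W, v, hC, hd.trans hW⟩

lemma isAffineCell_univ : IsAffineCell n (univ : Finset (H n)) :=
  ⟨(⊤ : Submodule (ZMod 2) (H n)), 0, fun x => by simp, by simp⟩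

open Classical in
lemma IsAffineCell.exists_refinement (hu : 0 ≤ u) (hC : IsAffineCell d C) :
    ∃ Q : Finpartition C, (∀ D ∈ Q.parts, IsAffineCell (d - 1) D) ∧
      cellEnergy U C + (if IsUniformCell u U C then 0 else u ^ 2 * #C) ≤ energy U Q := by
  obtain ⟨W, v, hCW, hd⟩ := hC
  by_cases hunif : IsUniformCell u U C
  · refine ⟨Finpartition.indiscrete (ne_empty_of_mem hCW.base_mem), ?_, ?_⟩
    · simpa using ⟨W, v, hCW, by linarith⟩
    · simp [hunif, energy_indiscrete]
  · obtain ⟨W', v', hCW', hlt⟩ :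
        ∃ W' v', IsCoset C W' v' ∧ u < relUniNorm (U ∩ C) W' v' := by
      simpa [IsUniformCell] using hunif
    obtain rfl := hCW'.direction_unique hCW
    obtain ⟨W'', Q, hrank, hQ, hE⟩ := hCW'.exists_split hu hlt
    refine ⟨Q, fun D hD => ?_, by simpa [hunif] using hE⟩
    obtain ⟨v'', hD⟩ := hQ D hD
    refine ⟨W'', v'', hD, ?_⟩
    have : (Module.finrank (ZMod 2) W'' : ℝ) + 1 = Module.finrank (ZMod 2) W' := by
      exact_mod_cast hrank
    linarith

lemma exists_refinement_energy_gt {S : Finset (H n)} (P : Finpartition S) {t : ℝ} (hu : 0 < u)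
    (hP : ∀ C ∈ P.parts, IsAffineCell d C)
    (hmass : t * #U < ∑ C ∈ nonuniformParts u U P, (#C : ℝ)) :
    ∃ P' : Finpartition S, (∀ C ∈ P'.parts, IsAffineCell (d - 1) C) ∧
      energy U P + t * u ^ 2 * #U < energy U P' := by
  classical
  choose Q hQ hE using fun C hC => (hP C hC).exists_refinement U u hu.le
  refine ⟨P.bind Q, fun D hD => ?_, ?_⟩
  · obtain ⟨C, hC, hD⟩ := Finpartition.mem_bind.mp hD
    exact hQ C hC D hD
  · have hgain :
        energy U P + u ^ 2 * ∑ C ∈ nonuniformParts u U P, (#C : ℝ) ≤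
          energy U (P.bind Q) := by
      rw [energy_bind, energy, nonuniformParts, sum_filter, mul_sum, ← sum_add_distrib,
        ← sum_attach]
      simp only [mul_ite, mul_zero, ite_not]
      exact sum_le_sum fun C _ => hE C.1 C.2
    nlinarith [mul_lt_mul_of_pos_left hmass (by positivity : 0 < u ^ 2)]

end Refinement

theorem exists_finpartition_of_energy_le {n : ℕ} (U : Finset (H n)) {t u r : ℝ} (ht : 0 ≤ t)
    (hu : 0 < u) {S : Finset (H n)} (hU : U ⊆ S) (k : ℕ) (P : Finpartition S)
    (hP : ∀ C ∈ P.parts, IsAffineCell (r + k) C)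
    (hE : #U ≤ energy U P + k * (t * u ^ 2 * #U)) :
    ∃ Q : Finpartition S, (∀ C ∈ Q.parts, IsAffineCell r C) ∧
      ∑ C ∈ nonuniformParts u U Q, (#C : ℝ) ≤ t * #U := by
  induction k generalizing P with
  | zero =>
    refine ⟨P, by simpa using hP, ?_⟩
    by_contra! hmass
    obtain ⟨P', -, hE'⟩ := exists_refinement_energy_gt U u P hu hP hmass
    have := energy_le_card U P' hU
    have : 0 ≤ t * u ^ 2 * #U := by positivity
    simp only [CharP.cast_eq_zero, zero_mul, add_zero] at hE
    linarith
  | succ k ih =>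
    obtain hmass | hmass := le_or_gt (∑ C ∈ nonuniformParts u U P, (#C : ℝ)) (t * #U)
    · exact ⟨P, fun C hC => (hP C hC).mono (le_add_of_nonneg_right (k + 1).cast_nonneg), hmass⟩
    obtain ⟨P', hP', hE'⟩ := exists_refinement_energy_gt U u P hu hP hmass
    refine ih P' (fun C hC => (hP' C hC).mono (by push_cast; linarith)) ?_
    push_cast at hE
    linarith

lemma exists_nat_one_le_mul_le_two_div {x : ℝ} (hx0 : 0 < x) (hx1 : x ≤ 1) :
    ∃ K : ℕ, 1 ≤ K * x ∧ (K : ℝ) ≤ 2 / x := by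
  refine ⟨⌈1 / x⌉₊, by rw [← div_le_iff₀ hx0]; exact Nat.le_ceil _, ?_⟩
  have hceil := Nat.ceil_lt_add_one (one_div_pos.mpr hx0).le
  have hone : 1 ≤ 1 / x := by rw [le_div_iff₀ hx0]; linarith
  have : 2 / x = 2 * (1 / x) := by ring
  linarith

theorem stmt_15_general {n : ℕ} (U : Finset (H n)) (t u : ℝ)
    (ht0 : 0 < t) (ht1 : t < 1) (hu0 : 0 < u) (hu1 : u < 1) :
    ∃ P N : Finset (Finset (H n)), N ⊆ P ∧
      (∀ x : H n, ∃! C, C ∈ P ∧ x ∈ C) ∧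
      (∀ C ∈ P, ∃ (W : Submodule (ZMod 2) (H n)) (v : H n),
        (∀ x, x ∈ C ↔ x - v ∈ W) ∧
        (n : ℝ) - 4 / (t * u ^ 2) ≤ (Module.finrank (ZMod 2) W : ℝ) ∧
        (C ∉ N → relUniNorm (U ∩ C) W v ≤ u)) ∧
      (∑ C ∈ N, (C.card : ℝ)) / (Fintype.card (H n) : ℝ) ≤ t * density U := by
  have htu : 0 < t * u ^ 2 := by positivity
  obtain ⟨K, hK, hK2⟩ := exists_nat_one_le_mul_le_two_div htu
    (by nlinarith [pow_lt_one₀ hu0.le hu1 two_ne_zero])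
  have hK4 : (K : ℝ) ≤ 4 / (t * u ^ 2) := hK2.trans (by gcongr; norm_num)
  set P₀ := Finpartition.indiscrete (univ_nonempty (α := H n)).ne_empty
  have hP₀ : ∀ C ∈ P₀.parts, IsAffineCell ((n - K : ℝ) + K) C := by
    simpa [P₀] using isAffineCell_univ
  have hE₀ : (#U : ℝ) ≤ energy U P₀ + K * (t * u ^ 2 * #U) := by
    nlinarith [energy_nonneg U P₀]
  obtain ⟨Q, hQ, hmass⟩ :=
    exists_finpartition_of_energy_le U ht0.le hu0 (subset_univ U) K P₀ hP₀ hE₀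
  refine ⟨Q.parts, nonuniformParts u U Q, fun C hC => ((mem_nonuniformParts U u).mp hC).1,
    fun x => Q.existsUnique_mem (mem_univ x), fun C hC => ?_, ?_⟩
  · obtain ⟨W, v, hCW, hd⟩ := hQ C hC
    refine ⟨W, v, hCW, by linarith, fun hN => ?_⟩
    have hunif : IsUniformCell u U C := by simpa [mem_nonuniformParts, hC] using hN
    exact hunif W v hCW
  · rw [density, ← mul_div_assoc]
    gcongr

/-- Energy increment: `F_2^n` can be partitioned into affine subspaces of
dimension at least `n - 4/(tu²)`, such that off an exceptional collection `N`
of total density at most `t·δ_U`, the set `U` is `u`-uniform on each cell. -/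
theorem stmt_15 {n : ℕ} (U : Finset (H n)) (t u : ℝ)
    (ht0 : 0 < t) (ht1 : t < 1) (hu0 : 0 < u) (hu1 : u < 1)
    (hδ : 0 < density U)
    (hn : 10 / (t * u ^ 2) ≤ (n : ℝ)) :
    ∃ P N : Finset (Finset (H n)), N ⊆ P ∧
      (∀ x : H n, ∃! C, C ∈ P ∧ x ∈ C) ∧
      (∀ C ∈ P, ∃ (W : Submodule (ZMod 2) (H n)) (v : H n),
        (∀ x, x ∈ C ↔ x - v ∈ W) ∧
        (n : ℝ) - 4 / (t * u ^ 2) ≤ (Module.finrank (ZMod 2) W : ℝ) ∧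
        (C ∉ N → relUniNorm (U ∩ C) W v ≤ u)) ∧
      (∑ C ∈ N, (C.card : ℝ)) / (Fintype.card (H n) : ℝ) ≤ t * density U :=
  stmt_15_general U t u ht0 ht1 hu0 hu1
end
end
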